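/- Let n ≥ 4 be even and a ∈ ℝ. The operator exp(a·D^{n−1}) = id + a·D^{n−1} maps the lattice M_n into itself if and only if a is an even integer. Moreover, for even a ∈ ℤ it is an isometry of χ_n, and exp(2·D^{n−1}) acts on the basis elements by γ_n(t+m) ↦ γ_n(t+m) + 2·γ_1(t) + (2m + n − 1)·γ_0(t) for every integer m, where γ_1(t) = t+1 and γ_0(t) = 1. -/

import Mathlib

open Polynomial

/-- `V n`: the real vector space of polynomials in `ℝ[t]` of degree at most `n`. -/
noncomputable def V (n : ℕ) : Submodule ℝ ℝ[X] := Polynomial.degreeLT ℝ (n + 1)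

/-- Differentiation `D : V_n → V_n`. -/
noncomputable def Dop (n : ℕ) : Module.End ℝ (V n) :=
  (Polynomial.derivative (R := ℝ)).restrict (p := V n) (q := V n) fun p hp => by
    rw [V, Polynomial.mem_degreeLT] at hp ⊢
    exact lt_of_le_of_lt Polynomial.degree_derivative_le hp

/-- `γ_m(t) = (t+1)(t+2)⋯(t+m)/m!`. -/
noncomputable def gam (m : ℕ) : ℝ[X] :=
  Polynomial.C ((m.factorial : ℝ))⁻¹ *
    ∏ i ∈ Finset.range m, (Polynomial.X + Polynomial.C (i + 1 : ℝ))

/-- `χ` is the Euler form: the (unique) bilinear form on `V n` with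
`χ(γ_n(t+i), γ_n(t+j)) = C(n+j-i, n)` for `0 ≤ i, j ≤ n` (binomial coefficient,
equal to `0` when `n+j-i < n`). -/
def EulerCond (n : ℕ) (χ : ↥(V n) →ₗ[ℝ] ↥(V n) →ₗ[ℝ] ℝ) : Prop :=
  ∀ (i j : Fin (n + 1)) (f g : V n),
    (f : ℝ[X]) = (gam n).comp (Polynomial.X + Polynomial.C ((i : ℕ) : ℝ)) →
    (g : ℝ[X]) = (gam n).comp (Polynomial.X + Polynomial.C ((j : ℕ) : ℝ)) →
    χ f g = ((n + (j : ℕ) - (i : ℕ)).choose n : ℝ)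

/-- The exponential of an endomorphism of `V n`. Since the endomorphisms we apply it
to are sums of positive powers of `D`, which satisfies `D^(n+1) = 0` on `V n`, the
series truncated at degree `n` equals the full exponential. -/
noncomputable def expE (n : ℕ) (N : Module.End ℝ (V n)) : Module.End ℝ (V n) :=
  ∑ j ∈ Finset.range (n + 1), ((j.factorial : ℝ))⁻¹ • N ^ j

/-- The lattice `M n` of integer-valued polynomials, as a subset of `V n`. -/
def MsetV (n : ℕ) : Set (V n) :=
  {f | ∀ m : ℤ, ∃ z : ℤ, (f : ℝ[X]).eval (m : ℝ) = (z : ℝ)}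


open Polynomial Finset

/-- `Bp m c` is `γ_m(t + c)`. -/
noncomputable def Bp (m : ℕ) (c : ℝ) : ℝ[X] :=
  Polynomial.C ((m.factorial : ℝ))⁻¹ *
    ∏ i ∈ Finset.range m, (Polynomial.X + Polynomial.C (c + i + 1 : ℝ))

lemma gam_comp (m : ℕ) (c : ℝ) : (gam m).comp (X + C c) = Bp m c := by
  simp only [gam, Bp, mul_comp, C_comp, Polynomial.prod_comp, add_comp, X_comp]
  congr 1
  refine Finset.prod_congr rfl fun i _ => ?_
  rw [add_assoc, ← C_add]
  norm_num
  ring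

lemma Bp_natDegree_prod (m : ℕ) (c : ℝ) :
    (∏ i ∈ Finset.range m, (X + C (c + i + 1 : ℝ))).natDegree = m := by
  rw [Polynomial.natDegree_prod]
  · calc ∑ i ∈ Finset.range m, (X + C (c + i + 1 : ℝ)).natDegree
        = ∑ _i ∈ Finset.range m, 1 :=
          Finset.sum_congr rfl fun i _ => Polynomial.natDegree_X_add_C _
    _ = m := by simp
  · intro i _
    exact (Polynomial.monic_X_add_C _).ne_zero

lemma Bp_monic_prod (m : ℕ) (c : ℝ) :
    (∏ i ∈ Finset.range m, (X + C (c + i + 1 : ℝ))).Monic :=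
  monic_prod_of_monic _ _ fun i _ => monic_X_add_C _

lemma Bp_natDegree_le (m : ℕ) (c : ℝ) : (Bp m c).natDegree ≤ m := by
  rw [Bp]
  refine le_trans natDegree_mul_le ?_
  rw [Bp_natDegree_prod, natDegree_C]
  omega

lemma Bp_mem (n m : ℕ) (c : ℝ) (h : m ≤ n) : Bp m c ∈ V n := by
  rw [V, Polynomial.mem_degreeLT]
  calc (Bp m c).degree ≤ (Bp m c).natDegree := degree_le_natDegree
  _ ≤ ((n : ℕ) : WithBot ℕ) := by exact_mod_cast le_trans (Bp_natDegree_le m c) h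
  _ < ((n+1 : ℕ) : WithBot ℕ) := by exact_mod_cast Nat.lt_succ_self n

lemma Bp_coeff_top (m : ℕ) (c : ℝ) : (Bp m c).coeff m = ((m.factorial : ℝ))⁻¹ := by
  rw [Bp, coeff_C_mul]
  have h := (Bp_monic_prod m c).coeff_natDegree
  rw [Bp_natDegree_prod] at h
  rw [h, mul_one]

lemma Bp_coeff_next (m : ℕ) (c : ℝ) (hm : m ≠ 0) :
    (Bp m c).coeff (m - 1) =
      ((m.factorial : ℝ))⁻¹ * (∑ i ∈ Finset.range m, (c + i + 1)) := by
  rw [Bp, coeff_C_mul]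
  congr 1
  have h := Monic.nextCoeff_prod (Finset.range m) _
    (fun i (_ : i ∈ Finset.range m) => monic_X_add_C (c + i + 1 : ℝ))
  have h2 : ∀ i ∈ Finset.range m, nextCoeff (X + C (c + i + 1 : ℝ)) = (c + i + 1 : ℝ) :=
    fun i _ => nextCoeff_X_add_C _
  rw [Finset.sum_congr rfl h2] at h
  rw [← h, nextCoeff_of_natDegree_pos]
  · rw [Bp_natDegree_prod]
  · rw [Bp_natDegree_prod]; omega

lemma deriv_Bp (n : ℕ) (hn : 2 ≤ n) (c : ℝ) :
    derivative^[n - 1] (Bp n c) = X + C (c + (n + 1) / 2) := by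
  obtain ⟨k, rfl⟩ : ∃ k, n = k + 2 := ⟨n - 2, by omega⟩
  have hk1 : k + 2 - 1 = k + 1 := by omega
  rw [hk1]
  have hdeg : (derivative^[k+1] (Bp (k+2) c)).natDegree ≤ 1 := by
    refine le_trans (natDegree_iterate_derivative _ _) ?_
    have := Bp_natDegree_le (k+2) c
    omega
  have hc1 : (derivative^[k+1] (Bp (k+2) c)).coeff 1 = 1 := by
    rw [coeff_iterate_derivative]
    have h1 : 1 + (k + 1) = k + 2 := by omega
    rw [h1, Bp_coeff_top]
    have hd : (k+2).descFactorial (k+1) = (k+2).factorial := by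
      have h3 := Nat.descFactorial_succ (k+2) (k+1)
      simp only [show k+2-(k+1) = 1 from by omega, one_mul] at h3
      rw [← h3, Nat.descFactorial_self]
    rw [hd, nsmul_eq_mul]
    rw [mul_inv_cancel₀]
    exact_mod_cast (Nat.factorial_pos (k+2)).ne'
  have hsum : (∑ i ∈ Finset.range (k+2), (c + i + 1)) =
      (k+2) * c + (k+2) * (k+1) / 2 + (k+2) := by
    rw [Finset.sum_add_distrib, Finset.sum_add_distrib, Finset.sum_const, Finset.sum_const,
      Finset.card_range]
    have : (∑ i ∈ Finset.range (k+2), (i : ℝ)) = (k+2) * (k+1) / 2 := by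
      have h := Finset.sum_range_id_mul_two (k+2)
      have h2 : ((∑ i ∈ Finset.range (k+2), i) * 2 : ℕ) = ((k+2) * (k+1) : ℕ) := by
        simpa using h
      have h3 := congrArg (fun x : ℕ => (x:ℝ)) h2
      push_cast at h3
      push_cast at h3 ⊢
      linarith
    rw [this]
    push_cast
    ring
  have hc0 : (derivative^[k+1] (Bp (k+2) c)).coeff 0 = c + ((k+2) + 1) / 2 := by
    have hcoeff : (Bp (k+2) c).coeff (k+1) =
        ((k+2).factorial : ℝ)⁻¹ * (∑ i ∈ Finset.range (k+2), (c + i + 1)) := by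
      have := Bp_coeff_next (k+2) c (by omega)
      simpa using this
    rw [coeff_iterate_derivative, zero_add, hcoeff, Nat.descFactorial_self, hsum, nsmul_eq_mul]
    have hf : ((k+2).factorial : ℝ) = (k+2) * (k+1).factorial := by
      exact_mod_cast Nat.factorial_succ (k+1)
    rw [hf]
    have h2 : ((k+1).factorial : ℝ) ≠ 0 := by
      exact_mod_cast (Nat.factorial_pos (k+1)).ne'
    have h3 : ((k:ℝ)+2) ≠ 0 := by positivity
    field_simp
    ring
  have := eq_X_add_C_of_natDegree_le_one hdeg
  rw [hc1, hc0] at this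
  rw [this, map_one, one_mul]
  push_cast
  ring_nf

lemma Bp_eval (m : ℕ) (c x : ℝ) :
    (Bp m c).eval x = ((m.factorial : ℝ))⁻¹ * ∏ i ∈ Finset.range m, (x + c + i + 1) := by
  rw [Bp, eval_mul, eval_C, eval_prod]
  congr 1
  refine Finset.prod_congr rfl fun i _ => ?_
  rw [eval_add, eval_X, eval_C]
  ring

lemma Bp_eval_eq (m : ℕ) (c x : ℝ) : (Bp m c).eval x = (Bp m (c + x)).eval 0 := by
  rw [Bp_eval, Bp_eval]
  congr 1
  exact Finset.prod_congr rfl fun i _ => by ring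

lemma prod_shift_asc (a m : ℕ) :
    (∏ i ∈ Finset.range m, ((0:ℝ) + ((a:ℤ):ℝ) + i + 1)) = (((a+1).ascFactorial m : ℕ) : ℝ) := by
  induction m with
  | zero => simp
  | succ m ih =>
    rw [Finset.prod_range_succ, ih, Nat.ascFactorial_succ]
    push_cast
    ring

lemma Bp_eval_zero_int (m : ℕ) (z : ℤ) (hz : -(m:ℤ) ≤ z) :
    (Bp m (z:ℝ)).eval 0 = (((z + m).toNat.choose m : ℕ) : ℝ) := by
  rw [Bp_eval]
  rcases le_or_gt 0 z with h0 | h0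
  · obtain ⟨a, rfl⟩ : ∃ a : ℕ, z = a := ⟨z.toNat, (Int.toNat_of_nonneg h0).symm⟩
    have ht : ((a:ℤ) + m).toNat = a + m := by omega
    rw [ht, prod_shift_asc, Nat.ascFactorial_eq_factorial_mul_choose]
    push_cast
    rw [← mul_assoc, inv_mul_cancel₀, one_mul]
    exact_mod_cast (Nat.factorial_pos m).ne'
  · have hi : (-z-1).toNat ∈ Finset.range m := by
      rw [Finset.mem_range]; omega
    have : (∏ i ∈ Finset.range m, ((0:ℝ) + z + i + 1)) = 0 := by
      refine Finset.prod_eq_zero hi ?_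
      have : (((-z-1).toNat : ℤ) : ℝ) = ((-z-1 : ℤ) : ℝ) := by
        congr 1; omega
      push_cast at this ⊢
      rw [this]; ring
    rw [this, mul_zero]
    have : (z + m).toNat < m := by omega
    rw [Nat.choose_eq_zero_of_lt this]
    norm_num

lemma Bp_reflect (m : ℕ) (z : ℤ) :
    (Bp m (z:ℝ)).eval 0 = (-1)^m * (Bp m ((-z-m-1 : ℤ):ℝ)).eval 0 := by
  rw [Bp_eval, Bp_eval]
  rw [mul_comm ((-1:ℝ)^m) _, mul_assoc]
  congr 1
  calc (∏ i ∈ Finset.range m, ((0:ℝ) + z + i + 1))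
      = ∏ i ∈ Finset.range m,
          ((-1) * ((0:ℝ) + ((-z-m-1 : ℤ):ℝ) + ((m - 1 - i : ℕ):ℝ) + 1)) := by
        refine Finset.prod_congr rfl fun i hi => ?_
        rw [Finset.mem_range] at hi
        have hcast : ((m - 1 - i : ℕ) : ℝ) = (m:ℝ) - 1 - i := by
          have h4 : (m - 1 - i : ℕ) = m - (i+1) := by omega
          rw [h4]
          push_cast [Nat.cast_sub (by omega : i + 1 ≤ m)]
          ring
        rw [hcast]
        push_cast
        ring
    _ = (∏ _i ∈ Finset.range m, (-1:ℝ)) *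
          ∏ i ∈ Finset.range m, ((0:ℝ) + ((-z-m-1 : ℤ):ℝ) + ((m - 1 - i : ℕ):ℝ) + 1) := by
        rw [Finset.prod_mul_distrib]
    _ = (-1)^m * ∏ j ∈ Finset.range m, ((0:ℝ) + ((-z-m-1 : ℤ):ℝ) + j + 1) := by
        rw [Finset.prod_const, Finset.card_range,
          Finset.prod_range_reflect (fun j => ((0:ℝ) + ((-z-m-1 : ℤ):ℝ) + j + 1)) m]
    _ = (∏ j ∈ Finset.range m, ((0:ℝ) + ((-z-m-1 : ℤ):ℝ) + j + 1)) * (-1)^m := by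
        ring

lemma Bp_eval_int (m : ℕ) (z : ℤ) : ∃ w : ℤ, (Bp m (z:ℝ)).eval 0 = (w : ℝ) := by
  rcases le_or_gt (-(m:ℤ)) z with h | h
  · exact ⟨((z + m).toNat.choose m : ℕ), by rw [Bp_eval_zero_int m z h]; push_cast; rfl⟩
  · refine ⟨(-1)^m * ((-z - m - 1 + m).toNat.choose m : ℕ), ?_⟩
    have key := Bp_reflect m z
    rw [key, Bp_eval_zero_int m _ (by omega)]
    push_cast
    ring

lemma Bp_zero (c : ℝ) : Bp 0 c = 1 := by simp [Bp]

lemma Bp_one (c : ℝ) : Bp 1 c = X + C (c + 1) := by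
  rw [Bp, Finset.prod_range_one]
  norm_num

lemma Bp_step (m : ℕ) (c : ℝ) : Bp (m+1) (c+1) - Bp (m+1) c = Bp m (c+1) := by
  set Q : ℝ[X] := ∏ i ∈ Finset.range m, (X + C (c + 1 + i + 1 : ℝ)) with hQdef
  have hQ1 : (∏ i ∈ Finset.range (m+1), (X + C (c + i + 1 : ℝ))) = (X + C (c+1)) * Q := by
    rw [Finset.prod_range_succ']
    have e1 : ∀ i ∈ Finset.range m,
        (X + C (c + ((i+1 : ℕ):ℝ) + 1)) = X + C (c + 1 + (i:ℝ) + 1) := by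
      intro i _
      congr 1
      congr 1
      push_cast
      ring
    rw [Finset.prod_congr rfl e1]
    have e2 : (c + ((0:ℕ):ℝ) + 1) = c + 1 := by norm_num
    rw [e2, mul_comm]
  have hQ2 : (∏ i ∈ Finset.range (m+1), (X + C (c + 1 + i + 1 : ℝ))) = Q * (X + C (c+1+m+1)) := by
    rw [Finset.prod_range_succ]
  have hC : (C (((m+1).factorial : ℝ))⁻¹ : ℝ[X]) * C ((m:ℝ)+1) = C ((m.factorial : ℝ))⁻¹ := by
    rw [← C_mul]
    congr 1
    have h1 : (((m+1).factorial : ℝ)) = (m+1) * (m.factorial : ℝ) := by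
      exact_mod_cast Nat.factorial_succ m
    rw [h1]
    have h2 : ((m.factorial : ℝ)) ≠ 0 := by exact_mod_cast (Nat.factorial_pos m).ne'
    have h3 : ((m:ℝ)+1) ≠ 0 := by positivity
    field_simp
  calc Bp (m+1) (c+1) - Bp (m+1) c
      = C (((m+1).factorial : ℝ))⁻¹ * (Q * (X + C (c+1+m+1))) -
        C (((m+1).factorial : ℝ))⁻¹ * ((X + C (c+1)) * Q) := by rw [Bp, Bp, hQ1, hQ2]
    _ = C (((m+1).factorial : ℝ))⁻¹ * Q * ((X + C (c+1+m+1)) - (X + C (c+1))) := by ring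
    _ = C (((m+1).factorial : ℝ))⁻¹ * Q * C ((m:ℝ)+1) := by
        congr 1
        rw [add_sub_add_left_eq_sub, ← C_sub]
        congr 1
        ring
    _ = C ((m.factorial : ℝ))⁻¹ * Q := by rw [mul_assoc, mul_comm Q, ← mul_assoc, hC]
    _ = Bp m (c+1) := by rw [Bp]

lemma fd_shift (s : ℕ) (f : ℝ → ℝ[X]) (a : ℝ) :
    (fwdDiff (1:ℝ))^[s] (fun x => f (x + a)) = fun x => (fwdDiff (1:ℝ))^[s] f (x + a) := by
  induction s generalizing f with
  | zero => simp
  | succ s ih =>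
    rw [Function.iterate_succ_apply, Function.iterate_succ_apply]
    have h : fwdDiff (1:ℝ) (fun x => f (x + a)) = fun x => (fwdDiff (1:ℝ) f) (x + a) := by
      funext x
      simp only [fwdDiff]
      rw [show x + 1 + a = x + a + 1 by ring]
    rw [h, ih (fwdDiff (1:ℝ) f)]

lemma fd_Bp (m : ℕ) : fwdDiff (1:ℝ) (Bp (m+1)) = fun c => Bp m (c+1) := by
  funext c
  rw [fwdDiff, Bp_step]

lemma fd_iter_Bp (s m : ℕ) (h : s ≤ m) :
    (fwdDiff (1:ℝ))^[s] (Bp m) = fun c => Bp (m - s) (c + s) := by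
  induction s generalizing m with
  | zero => simp
  | succ s ih =>
    rw [Function.iterate_succ_apply', ih m (by omega)]
    funext c
    obtain ⟨q, hq⟩ : ∃ q, m - s = q + 1 := ⟨m - s - 1, by omega⟩
    have step := Bp_step q (c + (s:ℝ))
    rw [fwdDiff]
    simp only [hq]
    have e3 : c + 1 + (s:ℝ) = c + (s:ℝ) + 1 := by ring
    rw [e3, step]
    have e4 : m - (s + 1) = q := by omega
    rw [e4]
    congr 1
    push_cast
    ring

lemma fd_iter_zero_fun (k : ℕ) :
    (fwdDiff (1:ℝ))^[k] (fun _ => (0:ℝ[X])) = fun _ => 0 := by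
  induction k with
  | zero => rfl
  | succ k ih =>
    rw [Function.iterate_succ_apply]
    have : fwdDiff (1:ℝ) (fun _ => (0:ℝ[X])) = fun _ => (0:ℝ[X]) := by
      funext x; simp [fwdDiff]
    rw [this, ih]

lemma fd_iter_Bp_zero (s m : ℕ) (h : m < s) :
    (fwdDiff (1:ℝ))^[s] (Bp m) = fun _ => 0 := by
  obtain ⟨k, rfl⟩ : ∃ k, s = (k + 1) + m := ⟨s - m - 1, by omega⟩
  rw [Function.iterate_add_apply, fd_iter_Bp m m le_rfl]
  have h1 : (fun c : ℝ => Bp (m - m) (c + m)) = fun _ => (1:ℝ[X]) := by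
    funext c; rw [Nat.sub_self, Bp_zero]
  rw [h1, Function.iterate_succ_apply]
  have h2 : fwdDiff (1:ℝ) (fun _ : ℝ => (1:ℝ[X])) = fun _ => (0:ℝ[X]) := by
    funext x; simp [fwdDiff]
  rw [h2, fd_iter_zero_fun]

lemma sum_Bp (s m : ℕ) (c : ℝ) :
    ∑ k ∈ Finset.range (s+1), (((-1:ℝ)^(s-k) * (s.choose k : ℕ)) • Bp m (c + k)) =
      if s ≤ m then Bp (m - s) (c + s) else 0 := by
  have key := fwdDiff_iter_eq_sum_shift (1:ℝ) (Bp m) s c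
  have h2 : ∀ k ∈ Finset.range (s+1),
      (((-1:ℤ)^(s-k) * (s.choose k : ℤ)) • Bp m (c + k • (1:ℝ)))
        = ((-1:ℝ)^(s-k) * (s.choose k : ℕ)) • Bp m (c + k) := by
    intro k _
    rw [← Int.cast_smul_eq_zsmul ℝ]
    congr 1
    · push_cast; ring
    · congr 1
      rw [nsmul_eq_mul, mul_one]
  rw [Finset.sum_congr rfl h2] at key
  rw [← key]
  rcases le_or_gt s m with h | h
  · rw [if_pos h, fd_iter_Bp s m h]
  · rw [if_neg (by omega), fd_iter_Bp_zero s m h]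

noncomputable def bbV (n : ℕ) (c : ℝ) : V n := ⟨Bp n c, Bp_mem n n c le_rfl⟩

@[simp] lemma bbV_coe (n : ℕ) (c : ℝ) : ((bbV n c : V n) : ℝ[X]) = Bp n c := rfl

lemma Dop_coe (n : ℕ) (f : V n) : ((Dop n f : V n) : ℝ[X]) = derivative (f : ℝ[X]) := rfl

lemma Dop_pow_coe (n k : ℕ) (f : V n) :
    (((Dop n ^ k) f : V n) : ℝ[X]) = derivative^[k] (f : ℝ[X]) := by
  induction k generalizing f with
  | zero => simp
  | succ k ih =>
    rw [pow_succ', Module.End.mul_apply, Dop_coe, ih f, Function.iterate_succ_apply']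

lemma finrankV (n : ℕ) : Module.finrank ℝ (V n) = n + 1 := by
  have h := (Polynomial.degreeLTEquiv ℝ (n+1)).finrank_eq
  rw [show V n = Polynomial.degreeLT ℝ (n+1) from rfl, h, Module.finrank_fin_fun]

lemma Bp_eval_lt (n i j : ℕ) (hi : i ≤ n) (hj : j < i) :
    (Bp n (i:ℝ)).eval (-(n+1+j:ℝ)) = 0 := by
  rw [Bp_eval_eq]
  have h1 : (i:ℝ) + (-(n+1+j:ℝ)) = ((i - n - 1 - j : ℤ):ℝ) := by push_cast; ring
  rw [h1, Bp_eval_zero_int _ _ (by omega)]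
  have h2 : ((i:ℤ) - n - 1 - j + n).toNat = i - j - 1 := by omega
  rw [h2, Nat.choose_eq_zero_of_lt (by omega)]
  norm_num

lemma Bp_eval_diag (n i : ℕ) : (Bp n (i:ℝ)).eval (-(n+1+i:ℝ)) = (-1)^n := by
  rw [Bp_eval_eq]
  have h1 : (i:ℝ) + (-(n+1+i:ℝ)) = ((-(n:ℤ)-1 : ℤ):ℝ) := by push_cast; ring
  rw [h1, Bp_reflect]
  have h2 : (-(-(n:ℤ)-1)-n-1 : ℤ) = 0 := by ring
  rw [h2, Bp_eval_zero_int n 0 (by omega)]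
  simp

lemma bb_indep (n : ℕ) (he : Even n) :
    LinearIndependent ℝ (fun i : Fin (n+1) => bbV n (i:ℕ)) := by
  rw [Fintype.linearIndependent_iff]
  intro g hg
  have hcoe : ∀ x : ℝ, (∑ i : Fin (n+1), g i * (Bp n ((i:ℕ):ℝ)).eval x) = 0 := by
    intro x
    have h0 := congrArg (fun v : V n => ((v : ℝ[X])).eval x) hg
    simpa [eval_finset_sum] using h0
  have key : ∀ N : ℕ, ∀ i : Fin (n+1), (i:ℕ) < N → g i = 0 := by
    intro N
    induction N with
    | zero => intro i hi; omega
    | succ N ihN =>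
      intro i hi
      rcases lt_or_ge (i:ℕ) N with h | h
      · exact ihN i h
      have hx := hcoe (-(n+1+(i:ℕ):ℝ))
      rw [Finset.sum_eq_single i] at hx
      · rw [Bp_eval_diag, he.neg_one_pow, mul_one] at hx
        exact hx
      · intro j _ hji
        rcases lt_or_gt_of_ne (fun hh : (j:ℕ) = (i:ℕ) => hji (Fin.ext hh)) with hlt | hgt
        · rw [ihN j (by omega), zero_mul]
        · rw [Bp_eval_lt n (j:ℕ) (i:ℕ) (by omega) hgt, mul_zero]
      · intro hni
        exact absurd (Finset.mem_univ i) hni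
  intro i
  exact key (n+2) i (by omega)

noncomputable def bas (n : ℕ) (he : Even n) : Module.Basis (Fin (n+1)) ℝ (V n) :=
  basisOfLinearIndependentOfCardEqFinrank (bb_indep n he)
    (by rw [Fintype.card_fin, finrankV])

lemma bas_eq (n : ℕ) (he : Even n) (i : Fin (n+1)) : bas n he i = bbV n (i:ℕ) := by
  rw [bas, coe_basisOfLinearIndependentOfCardEqFinrank]

lemma Bp_one_eval0 (c : ℝ) : (Bp 1 c).eval 0 = c + 1 := by
  rw [Bp_one]; simp

lemma sum_Bp_eval (s m : ℕ) (c : ℝ) :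
    ∑ k ∈ Finset.range (s+1), ((-1:ℝ)^(s-k) * (s.choose k : ℕ)) * (Bp m (c + k)).eval 0
      = if s ≤ m then (Bp (m-s) (c + s)).eval 0 else 0 := by
  have h := congrArg (fun p : ℝ[X] => p.eval 0) (sum_Bp s m c)
  simp only [eval_finset_sum, eval_smul, smul_eq_mul] at h
  rw [apply_ite (fun p : ℝ[X] => p.eval 0)] at h
  simpa using h

lemma sum_Bp_eval_rev (s m : ℕ) (c : ℝ) :
    ∑ k ∈ Finset.range (s+1), ((-1:ℝ)^(s-k) * (s.choose k : ℕ)) * (Bp m (c - k)).eval 0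
      = (-1)^s * (if s ≤ m then (Bp (m-s) c).eval 0 else 0) := by
  have hr := Finset.sum_range_reflect
    (fun k => ((-1:ℝ)^(s-k) * (s.choose k : ℕ)) * (Bp m (c - k)).eval 0) (s+1)
  rw [← hr]
  have hpt : ∀ k ∈ Finset.range (s+1),
      ((-1:ℝ)^(s-(s+1-1-k)) * (s.choose (s+1-1-k) : ℕ)) * (Bp m (c - (s+1-1-k:ℕ))).eval 0
        = (-1)^s * (((-1:ℝ)^(s-k) * (s.choose k : ℕ)) * (Bp m ((c - s) + k)).eval 0) := by
    intro k hk
    rw [Finset.mem_range] at hk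
    have h1 : s + 1 - 1 - k = s - k := by omega
    have h2 : s - (s - k) = k := by omega
    have h3 : (s.choose (s-k)) = s.choose k := Nat.choose_symm (by omega)
    have h4 : ((s - k : ℕ) : ℝ) = (s:ℝ) - k := by
      push_cast [Nat.cast_sub (by omega : k ≤ s)]; ring
    rw [h1, h2, h3, h4]
    have h5 : c - ((s:ℝ) - k) = (c - s) + k := by ring
    rw [h5]
    have h6 : (-1:ℝ)^k = (-1)^s * (-1)^(s-k) := by
      rw [← pow_add, show s + (s-k) = k + 2*(s-k) by omega, pow_add, pow_mul]
      norm_num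
    rw [h6]
    ring
  rw [Finset.sum_congr rfl hpt, ← Finset.mul_sum, sum_Bp_eval s m (c - s)]
  congr 2
  ring

noncomputable def Af (n : ℕ) : V n →ₗ[ℝ] ℝ :=
  ∑ k ∈ Finset.range (n+1),
    ((-1:ℝ)^(n-k) * (n.choose k : ℕ)) • ((Polynomial.leval ((k:ℕ):ℝ)).comp (V n).subtype)

noncomputable def Bf (n : ℕ) : V n →ₗ[ℝ] ℝ :=
  ∑ k ∈ Finset.range n,
    ((-1:ℝ)^(n-1-k) * ((n-1).choose k : ℕ)) • ((Polynomial.leval ((k:ℕ):ℝ)).comp (V n).subtype)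

lemma Af_apply (n : ℕ) (f : V n) :
    Af n f = ∑ k ∈ Finset.range (n+1),
      ((-1:ℝ)^(n-k) * (n.choose k : ℕ)) * (f : ℝ[X]).eval (k:ℝ) := by
  rw [Af, LinearMap.sum_apply]
  refine Finset.sum_congr rfl fun k _ => ?_
  rw [LinearMap.smul_apply, LinearMap.comp_apply]
  simp [Polynomial.leval, smul_eq_mul]

lemma Bf_apply (n : ℕ) (f : V n) :
    Bf n f = ∑ k ∈ Finset.range n,
      ((-1:ℝ)^(n-1-k) * ((n-1).choose k : ℕ)) * (f : ℝ[X]).eval (k:ℝ) := by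
  rw [Bf, LinearMap.sum_apply]
  refine Finset.sum_congr rfl fun k _ => ?_
  rw [LinearMap.smul_apply, LinearMap.comp_apply]
  simp [Polynomial.leval, smul_eq_mul]

lemma Af_bb (n : ℕ) (hn : 1 ≤ n) (c : ℝ) : Af n (bbV n c) = 1 := by
  rw [Af_apply]
  have h1 : ∀ k ∈ Finset.range (n+1),
      ((-1:ℝ)^(n-k) * (n.choose k : ℕ)) * ((bbV n c : V n) : ℝ[X]).eval (k:ℝ)
        = ((-1:ℝ)^(n-k) * (n.choose k : ℕ)) * (Bp n (c + k)).eval 0 := by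
    intro k _
    rw [bbV_coe, Bp_eval_eq]
  rw [Finset.sum_congr rfl h1, sum_Bp_eval n n c, if_pos le_rfl, Nat.sub_self, Bp_zero]
  simp

lemma Bf_bb (n : ℕ) (hn : 2 ≤ n) (c : ℝ) : Bf n (bbV n c) = c + n := by
  obtain ⟨s, rfl⟩ : ∃ s, n = s + 1 := ⟨n - 1, by omega⟩
  rw [Bf_apply]
  have h1 : ∀ k ∈ Finset.range (s+1),
      ((-1:ℝ)^(s+1-1-k) * ((s+1-1).choose k : ℕ)) * ((bbV (s+1) c : V (s+1)) : ℝ[X]).eval (k:ℝ)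
        = ((-1:ℝ)^(s-k) * (s.choose k : ℕ)) * (Bp (s+1) (c + k)).eval 0 := by
    intro k _
    rw [bbV_coe, Bp_eval_eq]
    norm_num
  rw [Finset.sum_congr rfl h1, sum_Bp_eval s (s+1) c, if_pos (by omega)]
  have h2 : s + 1 - s = 1 := by omega
  rw [h2, Bp_one_eval0]
  push_cast
  ring

noncomputable def Dl (n : ℕ) : V n →ₗ[ℝ] ℝ[X] :=
  (((Polynomial.derivative : ℝ[X] →ₗ[ℝ] ℝ[X]) ^ (n-1))).comp (V n).subtype

lemma Dl_apply (n : ℕ) (f : V n) : Dl n f = derivative^[n-1] (f : ℝ[X]) := by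
  rw [Dl, LinearMap.comp_apply, Submodule.subtype_apply, Module.End.pow_apply]

lemma Dl_eq_Dop (n : ℕ) (f : V n) : Dl n f = (((Dop n ^ (n-1)) f : V n) : ℝ[X]) := by
  rw [Dl_apply, Dop_pow_coe]

lemma deriv_eq_lin (n : ℕ) (hn : 2 ≤ n) (he : Even n) (f : V n) :
    derivative^[n-1] (f : ℝ[X]) =
      C (Af n f) * X + C (Bf n f - ((n:ℝ)-1)/2 * Af n f) := by
  set Φ : V n →ₗ[ℝ] ℝ[X] :=
    Dl n - ((Af n).smulRight X + ((Bf n) - (((n:ℝ)-1)/2) • (Af n)).smulRight 1) with hΦ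
  have hzero : Φ = 0 := by
    refine Module.Basis.ext (bas n he) fun i => ?_
    rw [bas_eq]
    rw [hΦ]
    simp only [LinearMap.sub_apply, LinearMap.add_apply, LinearMap.smulRight_apply,
      LinearMap.smul_apply, LinearMap.zero_apply, smul_eq_mul]
    rw [Dl_apply, bbV_coe, deriv_Bp n hn, Af_bb n (by omega), Bf_bb n hn, one_smul,
      mul_one, smul_eq_C_mul, mul_one, sub_eq_zero]
    congr 2
    ring
  have happ := congrArg (fun Ψ : V n →ₗ[ℝ] ℝ[X] => Ψ f) hzero
  rw [hΦ] at happ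
  simp only [LinearMap.sub_apply, LinearMap.add_apply, LinearMap.smulRight_apply,
    LinearMap.smul_apply, LinearMap.zero_apply, smul_eq_mul] at happ
  rw [Dl_apply, sub_eq_zero] at happ
  rw [happ, smul_eq_C_mul, smul_eq_C_mul, mul_one]

noncomputable def uV (n : ℕ) : V n :=
  ∑ k ∈ Finset.range n, ((-1:ℝ)^(n-1-k) * ((n-1).choose k : ℕ)) • bbV n (k:ℕ)
noncomputable def eV (n : ℕ) : V n :=
  ∑ k ∈ Finset.range (n+1), ((-1:ℝ)^(n-k) * (n.choose k : ℕ)) • bbV n (k:ℕ)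

lemma uV_coe (n : ℕ) (hn : 2 ≤ n) : ((uV n : V n) : ℝ[X]) = X + C (n:ℝ) := by
  obtain ⟨s, rfl⟩ : ∃ s, n = s + 1 := ⟨n - 1, by omega⟩
  have h0 : ((uV (s+1) : V (s+1)) : ℝ[X])
      = ∑ k ∈ Finset.range (s+1), ((-1:ℝ)^(s-k) * (s.choose k : ℕ)) • Bp (s+1) ((0:ℝ) + k) := by
    rw [uV]
    rw [AddSubmonoidClass.coe_finset_sum]
    refine Finset.sum_congr rfl fun k _ => ?_
    rw [Submodule.coe_smul, bbV_coe]
    norm_num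
  rw [h0, sum_Bp s (s+1) 0, if_pos (by omega), show s + 1 - s = 1 by omega, Bp_one]
  push_cast
  ring_nf

lemma eV_coe (n : ℕ) : ((eV n : V n) : ℝ[X]) = 1 := by
  have h0 : ((eV n : V n) : ℝ[X])
      = ∑ k ∈ Finset.range (n+1), ((-1:ℝ)^(n-k) * (n.choose k : ℕ)) • Bp n ((0:ℝ) + k) := by
    rw [eV]
    rw [AddSubmonoidClass.coe_finset_sum]
    refine Finset.sum_congr rfl fun k _ => ?_
    rw [Submodule.coe_smul, bbV_coe]
    norm_num
  rw [h0, sum_Bp n n 0, if_pos le_rfl, Nat.sub_self, Bp_zero]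

lemma E_bb (n : ℕ) (hn : 2 ≤ n) (c : ℝ) :
    ((Dop n)^(n-1)) (bbV n c) = uV n + (c + (1-(n:ℝ))/2) • eV n := by
  apply Subtype.ext
  rw [Dop_pow_coe, bbV_coe, deriv_Bp n hn c]
  rw [Submodule.coe_add, Submodule.coe_smul, uV_coe n hn, eV_coe, smul_eq_C_mul, mul_one]
  rw [add_assoc, ← C_add]
  congr 2
  ring

section chi
variable (n : ℕ) (hn : 4 ≤ n) (he : Even n)
  (χ : ↥(V n) →ₗ[ℝ] ↥(V n) →ₗ[ℝ] ℝ) (hχ : EulerCond n χ)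
include hn he hχ

lemma chi_bb (k l : ℕ) (hk : k ≤ n) (hl : l ≤ n) :
    χ (bbV n (k:ℕ)) (bbV n (l:ℕ)) = (Bp n (((l:ℤ) - k : ℤ):ℝ)).eval 0 := by
  have h1 := hχ ⟨k, by omega⟩ ⟨l, by omega⟩ (bbV n k) (bbV n l)
    (by rw [bbV_coe, gam_comp]) (by rw [bbV_coe, gam_comp])
  simp only [Fin.val_mk] at h1
  rw [h1, Bp_eval_zero_int n ((l:ℤ) - k) (by omega)]
  congr 2
  omega

lemma chi_u_bb (l : ℕ) (hl : l ≤ n) :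
    χ (uV n) (bbV n (l:ℕ)) = -((l:ℝ)+1) := by
  obtain ⟨s, hs⟩ : ∃ s, n = s + 1 := ⟨n - 1, by omega⟩
  have hexp : χ (uV n) (bbV n (l:ℕ)) =
      ∑ k ∈ Finset.range n, ((-1:ℝ)^(n-1-k) * ((n-1).choose k : ℕ)) *
        χ (bbV n (k:ℕ)) (bbV n (l:ℕ)) := by
    rw [uV, map_sum, LinearMap.sum_apply]
    refine Finset.sum_congr rfl fun k _ => ?_
    rw [map_smul, LinearMap.smul_apply, smul_eq_mul]
  rw [hexp]
  have hpt : ∀ k ∈ Finset.range n,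
      ((-1:ℝ)^(n-1-k) * ((n-1).choose k : ℕ)) * χ (bbV n (k:ℕ)) (bbV n (l:ℕ))
        = ((-1:ℝ)^(n-1-k) * ((n-1).choose k : ℕ)) * (Bp n ((l:ℝ) - k)).eval 0 := by
    intro k hk
    rw [Finset.mem_range] at hk
    rw [chi_bb n hn he χ hχ k l (by omega) hl]
    congr 2
    push_cast
    ring
  rw [Finset.sum_congr rfl hpt]
  have hr : ∑ k ∈ Finset.range n, ((-1:ℝ)^(n-1-k) * ((n-1).choose k : ℕ)) *
      (Bp n ((l:ℝ) - k)).eval 0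
      = ∑ k ∈ Finset.range (s+1), ((-1:ℝ)^(s-k) * (s.choose k : ℕ)) *
        (Bp n ((l:ℝ) - k)).eval 0 := by
    rw [hs]
    refine Finset.sum_congr rfl fun k _ => ?_
    norm_num
  rw [hr, sum_Bp_eval_rev s n (l:ℝ), if_pos (by omega), show n - s = 1 by omega, Bp_one_eval0]
  have : Odd s := by
    rcases he with ⟨t, ht⟩
    exact ⟨t - 1, by omega⟩
  rw [this.neg_one_pow]
  ring

lemma chi_bb_u (k : ℕ) (hk : k ≤ n) :
    χ (bbV n (k:ℕ)) (uV n) = (n:ℝ) - k := by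
  obtain ⟨s, hs⟩ : ∃ s, n = s + 1 := ⟨n - 1, by omega⟩
  have hexp : χ (bbV n (k:ℕ)) (uV n) =
      ∑ l ∈ Finset.range n, ((-1:ℝ)^(n-1-l) * ((n-1).choose l : ℕ)) *
        χ (bbV n (k:ℕ)) (bbV n (l:ℕ)) := by
    rw [uV, map_sum]
    refine Finset.sum_congr rfl fun l _ => ?_
    rw [map_smul, smul_eq_mul]
  rw [hexp]
  have hpt : ∀ l ∈ Finset.range n,
      ((-1:ℝ)^(n-1-l) * ((n-1).choose l : ℕ)) * χ (bbV n (k:ℕ)) (bbV n (l:ℕ))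
        = ((-1:ℝ)^(s-l) * (s.choose l : ℕ)) * (Bp n ((-(k:ℝ)) + l)).eval 0 := by
    intro l hl
    rw [Finset.mem_range] at hl
    rw [chi_bb n hn he χ hχ k l hk (by omega)]
    have e1 : (((l:ℤ) - k : ℤ):ℝ) = (-(k:ℝ)) + l := by push_cast; ring
    rw [e1, hs]
    norm_num
  rw [Finset.sum_congr rfl hpt, show Finset.range n = Finset.range (s+1) by rw [hs],
    sum_Bp_eval s n (-(k:ℝ)), if_pos (by omega), show n - s = 1 by omega, Bp_one_eval0]
  have : ((s:ℝ)) = (n:ℝ) - 1 := by rw [hs]; push_cast; ring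
  rw [this]
  ring

lemma chi_e_bb (l : ℕ) (hl : l ≤ n) :
    χ (eV n) (bbV n (l:ℕ)) = 1 := by
  have hexp : χ (eV n) (bbV n (l:ℕ)) =
      ∑ k ∈ Finset.range (n+1), ((-1:ℝ)^(n-k) * (n.choose k : ℕ)) *
        χ (bbV n (k:ℕ)) (bbV n (l:ℕ)) := by
    rw [eV, map_sum, LinearMap.sum_apply]
    refine Finset.sum_congr rfl fun k _ => ?_
    rw [map_smul, LinearMap.smul_apply, smul_eq_mul]
  rw [hexp]
  have hpt : ∀ k ∈ Finset.range (n+1),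
      ((-1:ℝ)^(n-k) * (n.choose k : ℕ)) * χ (bbV n (k:ℕ)) (bbV n (l:ℕ))
        = ((-1:ℝ)^(n-k) * (n.choose k : ℕ)) * (Bp n ((l:ℝ) - k)).eval 0 := by
    intro k hk
    rw [Finset.mem_range] at hk
    rw [chi_bb n hn he χ hχ k l (by omega) hl]
    congr 2
    push_cast
    ring
  rw [Finset.sum_congr rfl hpt, sum_Bp_eval_rev n n (l:ℝ), if_pos le_rfl, Nat.sub_self,
    Bp_zero, he.neg_one_pow]
  simp

lemma chi_bb_e (k : ℕ) (hk : k ≤ n) :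
    χ (bbV n (k:ℕ)) (eV n) = 1 := by
  have hexp : χ (bbV n (k:ℕ)) (eV n) =
      ∑ l ∈ Finset.range (n+1), ((-1:ℝ)^(n-l) * (n.choose l : ℕ)) *
        χ (bbV n (k:ℕ)) (bbV n (l:ℕ)) := by
    rw [eV, map_sum]
    refine Finset.sum_congr rfl fun l _ => ?_
    rw [map_smul, smul_eq_mul]
  rw [hexp]
  have hpt : ∀ l ∈ Finset.range (n+1),
      ((-1:ℝ)^(n-l) * (n.choose l : ℕ)) * χ (bbV n (k:ℕ)) (bbV n (l:ℕ))
        = ((-1:ℝ)^(n-l) * (n.choose l : ℕ)) * (Bp n ((-(k:ℝ)) + l)).eval 0 := by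
    intro l hl
    rw [Finset.mem_range] at hl
    rw [chi_bb n hn he χ hχ k l hk (by omega)]
    congr 2
    push_cast
    ring
  rw [Finset.sum_congr rfl hpt, sum_Bp_eval n n (-(k:ℝ)), if_pos le_rfl, Nat.sub_self, Bp_zero]
  simp

lemma chi_u_u : χ (uV n) (uV n) = 0 := by
  obtain ⟨s, hs⟩ : ∃ s, n = s + 1 := ⟨n - 1, by omega⟩
  have hexp : χ (uV n) (uV n) =
      ∑ l ∈ Finset.range n, ((-1:ℝ)^(n-1-l) * ((n-1).choose l : ℕ)) *
        χ (uV n) (bbV n (l:ℕ)) := by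
    rw [uV, map_sum]
    refine Finset.sum_congr rfl fun l _ => ?_
    rw [map_smul, smul_eq_mul]
  rw [hexp]
  have hpt : ∀ l ∈ Finset.range n,
      ((-1:ℝ)^(n-1-l) * ((n-1).choose l : ℕ)) * χ (uV n) (bbV n (l:ℕ))
        = -(((-1:ℝ)^(s-l) * (s.choose l : ℕ)) * (Bp 1 ((0:ℝ) + l)).eval 0) := by
    intro l hl
    rw [Finset.mem_range] at hl
    rw [chi_u_bb n hn he χ hχ l (by omega), Bp_one_eval0, hs]
    norm_num
    ring
  rw [Finset.sum_congr rfl hpt, Finset.sum_neg_distrib,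
    show Finset.range n = Finset.range (s+1) by rw [hs], sum_Bp_eval s 1 0,
    if_neg (by omega)]
  simp

lemma chi_u_e : χ (uV n) (eV n) = 0 := by
  have hexp : χ (uV n) (eV n) =
      ∑ l ∈ Finset.range (n+1), ((-1:ℝ)^(n-l) * (n.choose l : ℕ)) *
        χ (uV n) (bbV n (l:ℕ)) := by
    rw [eV, map_sum]
    refine Finset.sum_congr rfl fun l _ => ?_
    rw [map_smul, smul_eq_mul]
  rw [hexp]
  have hpt : ∀ l ∈ Finset.range (n+1),
      ((-1:ℝ)^(n-l) * (n.choose l : ℕ)) * χ (uV n) (bbV n (l:ℕ))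
        = -(((-1:ℝ)^(n-l) * (n.choose l : ℕ)) * (Bp 1 ((0:ℝ) + l)).eval 0) := by
    intro l hl
    rw [Finset.mem_range] at hl
    rw [chi_u_bb n hn he χ hχ l (by omega), Bp_one_eval0]
    norm_num
    ring
  rw [Finset.sum_congr rfl hpt, Finset.sum_neg_distrib, sum_Bp_eval n 1 0,
    if_neg (by omega)]
  simp

lemma chi_e_u : χ (eV n) (uV n) = 0 := by
  obtain ⟨s, hs⟩ : ∃ s, n = s + 1 := ⟨n - 1, by omega⟩
  have hexp : χ (eV n) (uV n) =
      ∑ l ∈ Finset.range n, ((-1:ℝ)^(n-1-l) * ((n-1).choose l : ℕ)) *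
        χ (eV n) (bbV n (l:ℕ)) := by
    rw [uV, map_sum]
    refine Finset.sum_congr rfl fun l _ => ?_
    rw [map_smul, smul_eq_mul]
  rw [hexp]
  have hpt : ∀ l ∈ Finset.range n,
      ((-1:ℝ)^(n-1-l) * ((n-1).choose l : ℕ)) * χ (eV n) (bbV n (l:ℕ))
        = ((-1:ℝ)^(s-l) * (s.choose l : ℕ)) * (Bp 0 ((0:ℝ) + l)).eval 0 := by
    intro l hl
    rw [Finset.mem_range] at hl
    rw [chi_e_bb n hn he χ hχ l (by omega), Bp_zero, hs]
    norm_num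
  rw [Finset.sum_congr rfl hpt, show Finset.range n = Finset.range (s+1) by rw [hs],
    sum_Bp_eval s 0 0, if_neg (by omega)]

lemma chi_e_e : χ (eV n) (eV n) = 0 := by
  have hexp : χ (eV n) (eV n) =
      ∑ l ∈ Finset.range (n+1), ((-1:ℝ)^(n-l) * (n.choose l : ℕ)) *
        χ (eV n) (bbV n (l:ℕ)) := by
    rw [eV, map_sum]
    refine Finset.sum_congr rfl fun l _ => ?_
    rw [map_smul, smul_eq_mul]
  rw [hexp]
  have hpt : ∀ l ∈ Finset.range (n+1),
      ((-1:ℝ)^(n-l) * (n.choose l : ℕ)) * χ (eV n) (bbV n (l:ℕ))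
        = ((-1:ℝ)^(n-l) * (n.choose l : ℕ)) * (Bp 0 ((0:ℝ) + l)).eval 0 := by
    intro l hl
    rw [Finset.mem_range] at hl
    rw [chi_e_bb n hn he χ hχ l (by omega), Bp_zero]
    norm_num
  rw [Finset.sum_congr rfl hpt, sum_Bp_eval n 0 0, if_neg (by omega)]

lemma isom_full (a : ℝ) (f g : V n) :
    χ (((1 : Module.End ℝ (V n)) + a • (Dop n) ^ (n - 1)) f)
      (((1 : Module.End ℝ (V n)) + a • (Dop n) ^ (n - 1)) g) = χ f g := by
  set T : Module.End ℝ (V n) := (1 : Module.End ℝ (V n)) + a • (Dop n) ^ (n - 1) with hT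
  have hTb : ∀ c : ℝ, T (bbV n c) = bbV n c + a • (uV n + (c + (1-(n:ℝ))/2) • eV n) := by
    intro c
    rw [hT, LinearMap.add_apply, LinearMap.smul_apply, Module.End.one_apply,
      E_bb n (by omega) c]
  have key : χ.compl₁₂ T T = χ := by
    refine Module.Basis.ext (bas n he) fun i => ?_
    refine Module.Basis.ext (bas n he) fun j => ?_
    rw [LinearMap.compl₁₂_apply, bas_eq, bas_eq, hTb, hTb]
    have hi : ((i : ℕ) : ℝ) + (1-(n:ℝ))/2 = (i : ℕ) + (1-(n:ℝ))/2 := rfl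
    simp only [map_add, map_smul, LinearMap.add_apply, LinearMap.smul_apply, smul_eq_mul]
    rw [chi_u_bb n hn he χ hχ (j:ℕ) (by omega), chi_bb_u n hn he χ hχ (i:ℕ) (by omega),
      chi_e_bb n hn he χ hχ (j:ℕ) (by omega), chi_bb_e n hn he χ hχ (i:ℕ) (by omega),
      chi_u_u n hn he χ hχ, chi_u_e n hn he χ hχ, chi_e_u n hn he χ hχ, chi_e_e n hn he χ hχ]
    ring
  calc χ (T f) (T g) = (χ.compl₁₂ T T) f g := rfl
  _ = χ f g := by rw [key]

end chi

lemma gam_zero : gam 0 = 1 := by simp [gam]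

lemma gam_one : gam 1 = X + C 1 := by
  rw [gam, Finset.prod_range_one]
  norm_num

lemma op_coe (n : ℕ) (a : ℝ) (x : V n) :
    ((((1 : Module.End ℝ (V n)) + a • (Dop n) ^ (n - 1)) x : V n) : ℝ[X]) =
      (x : ℝ[X]) + a • derivative^[n-1] ((x : ℝ[X])) := by
  rw [LinearMap.add_apply, Module.End.one_apply, LinearMap.smul_apply, Submodule.coe_add,
    Submodule.coe_smul, Dop_pow_coe]

/-- Let `n ≥ 4` be even and `a ∈ ℝ`. The operator `exp(a·D^{n-1}) = id + a·D^{n-1}` maps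
the lattice `M_n` into itself iff `a` is an even integer; for even `a ∈ ℤ` it is an
isometry of `χ_n`, and `exp(2·D^{n-1})` acts on the basis elements by
`γ_n(t+m) ↦ γ_n(t+m) + 2·γ_1(t) + (2m+n-1)·γ_0(t)` for every integer `m`,
where `γ_1(t) = t+1` and `γ_0(t) = 1`. -/
theorem exp_top_even_power (n : ℕ) (hn : 4 ≤ n) (heven : Even n) (a : ℝ) :
    (Set.MapsTo (⇑((1 : Module.End ℝ (V n)) + a • (Dop n) ^ (n - 1)))
        (MsetV n) (MsetV n) ↔ ∃ z : ℤ, a = 2 * (z : ℝ)) ∧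
    ((∃ z : ℤ, a = 2 * (z : ℝ)) →
      ∀ χ : ↥(V n) →ₗ[ℝ] ↥(V n) →ₗ[ℝ] ℝ, EulerCond n χ →
        ∀ f g : V n,
          χ (((1 : Module.End ℝ (V n)) + a • (Dop n) ^ (n - 1)) f)
            (((1 : Module.End ℝ (V n)) + a • (Dop n) ^ (n - 1)) g) = χ f g) ∧
    (∀ m : ℤ, ∀ g : V n, (g : ℝ[X]) = (gam n).comp (Polynomial.X + Polynomial.C (m : ℝ)) →
      ((((1 : Module.End ℝ (V n)) + (2 : ℝ) • (Dop n) ^ (n - 1)) g : V n) : ℝ[X]) =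
        (g : ℝ[X]) + Polynomial.C (2 : ℝ) * gam 1 +
          Polynomial.C (2 * (m : ℝ) + (n : ℝ) - 1) * gam 0) := by
  have hn2 : 2 ≤ n := by omega
  refine ⟨⟨?_, ?_⟩, ?_, ?_⟩
  · -- forward: MapsTo → a even integer
    intro hM
    have hf0 : bbV n (-(n:ℝ)) ∈ MsetV n := by
      intro m
      obtain ⟨w, hw⟩ := Bp_eval_int n (m - n)
      refine ⟨w, ?_⟩
      rw [bbV_coe, Bp_eval_eq, show (-(n:ℝ) + m) = ((m - n : ℤ):ℝ) by push_cast; ring, hw]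
    have hT := hM hf0
    have hder := deriv_Bp n hn2 (-(n:ℝ))
    have hv0 : (Bp n (-(n:ℝ))).eval ((0:ℤ):ℝ) = 0 := by
      rw [show ((0:ℤ):ℝ) = (0:ℝ) by norm_num, Bp_eval_eq,
        show (-(n:ℝ) + 0) = ((-(n:ℤ) : ℤ):ℝ) by push_cast; ring,
        Bp_eval_zero_int n (-(n:ℤ)) (by omega), show (-(n:ℤ) + n).toNat = 0 by omega,
        Nat.choose_eq_zero_of_lt (by omega)]
      norm_num
    have hv1 : (Bp n (-(n:ℝ))).eval ((1:ℤ):ℝ) = 0 := by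
      rw [show ((1:ℤ):ℝ) = (1:ℝ) by norm_num, Bp_eval_eq,
        show (-(n:ℝ) + 1) = ((1 - (n:ℤ) : ℤ):ℝ) by push_cast; ring,
        Bp_eval_zero_int n (1-(n:ℤ)) (by omega), show (1 - (n:ℤ) + n).toNat = 1 by omega,
        Nat.choose_eq_zero_of_lt (by omega)]
      norm_num
    obtain ⟨z0, hz0⟩ := hT (0:ℤ)
    obtain ⟨z1, hz1⟩ := hT (1:ℤ)
    rw [op_coe, bbV_coe, hder, eval_add, eval_smul, hv0, eval_add, eval_X, eval_C,
      smul_eq_mul] at hz0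
    rw [op_coe, bbV_coe, hder, eval_add, eval_smul, hv1, eval_add, eval_X, eval_C,
      smul_eq_mul] at hz1
    push_cast at hz0 hz1
    -- hz0 : 0 + a * (0 + (-n + (n+1)/2)) = z0 ; hz1 : 0 + a * (1 + (-n + (n+1)/2)) = z1
    have ha : a = ((z1 - z0 : ℤ):ℝ) := by push_cast; linarith
    have hint : (z1 - z0) * (1 - (n:ℤ)) = 2 * z0 := by
      have : ((z1 - z0 : ℤ):ℝ) * (1 - (n:ℝ)) = ((2 * z0 : ℤ):ℝ) := by
        rw [← ha]; push_cast; linarith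
      exact_mod_cast this
    obtain ⟨t, ht⟩ := heven
    have hevenz : Even (z1 - z0) := by
      have h2 : Even ((z1 - z0) * (1 - (n:ℤ))) := ⟨z0, by omega⟩
      rw [Int.even_mul] at h2
      rcases h2 with h2 | h2
      · exact h2
      · exfalso
        obtain ⟨r, hr⟩ := h2
        omega
    obtain ⟨d, hd⟩ := hevenz
    refine ⟨d, ?_⟩
    rw [ha, show z1 - z0 = 2 * d by omega]
    push_cast
    ring
  · -- backward
    rintro ⟨z, rfl⟩ f hf m
    have hFk : ∀ k : ℕ, ∃ w : ℤ, (f : ℝ[X]).eval ((k:ℕ):ℝ) = (w:ℝ) := by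
      intro k
      obtain ⟨w, hw⟩ := hf (k : ℤ)
      exact ⟨w, by rw [← hw]; norm_num⟩
    choose F hF using hFk
    obtain ⟨Fm, hFm⟩ := hf m
    set ZA : ℤ := ∑ k ∈ Finset.range (n+1), ((-1:ℤ)^(n-k) * (n.choose k : ℤ)) * F k with hZA
    set ZB : ℤ := ∑ k ∈ Finset.range n, ((-1:ℤ)^(n-1-k) * ((n-1).choose k : ℤ)) * F k with hZB
    have hA : Af n f = ((ZA : ℤ):ℝ) := by
      rw [Af_apply, hZA]
      push_cast
      exact Finset.sum_congr rfl fun k _ => by rw [hF k]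
    have hB : Bf n f = ((ZB : ℤ):ℝ) := by
      rw [Bf_apply, hZB]
      push_cast
      exact Finset.sum_congr rfl fun k _ => by rw [hF k]
    refine ⟨Fm + 2*z*ZA*m + 2*z*ZB - z*ZA*((n:ℤ)-1), ?_⟩
    rw [op_coe, eval_add, eval_smul, deriv_eq_lin n hn2 heven, eval_add, eval_mul, eval_C,
      eval_X, eval_C, hFm, hA, hB, smul_eq_mul]
    push_cast
    ring
  · rintro ⟨z, hz⟩ χ hχ f g
    exact isom_full n hn heven χ hχ a f g
  · intro m g hg
    have key : (2:ℝ) • (X + C ((m:ℝ) + ((n:ℝ)+1)/2)) =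
        C (2:ℝ) * gam 1 + C (2*(m:ℝ) + (n:ℝ) - 1) * gam 0 := by
      rw [gam_one, gam_zero, mul_one, smul_eq_C_mul, mul_add, mul_add, ← C_mul, ← C_mul,
        add_assoc, ← C_add]
      congr 2
      ring
    rw [op_coe, hg, gam_comp, deriv_Bp n hn2, key, ← add_assoc]
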